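/- arXiv:1105.1747 — 2 statements merged into one kernel-verified Lean document; each statement's English description precedes it below -/
import Mathlib

section
/- Let (α_k) be a nondecreasing sequence of positive reals tending to infinity and suppose limsup_k α_{k+1}/α_k > 1. Then there is no constant C > 0 such that the eigenvalue counting function N(x) = #{k : α_k ≤ x} satisfies N(x)/x^d → C for any d > 0. -/
/-!
Choose `1 < q < limsup α (k+1) / α k`. Infinitely often there is a gap `q α_j < α_{j+1}`, and on
such a gap the counting function is constant: `N (q α_j) = N α_j`. Along `x = α_j → ∞` the ratio
`N x / x ^ d` would then tend both to `C` and to `C / q ^ d`, forcing `C = 0`.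
-/

open Set Filter

lemma setOf_le_eq_Iic_of_mem_Ico {α : ℕ → ℝ} (hmono : Monotone α) {j : ℕ} {x : ℝ}
    (hjx : α j ≤ x) (hxj : x < α (j + 1)) : {k | α k ≤ x} = Iic j := by
  ext k
  refine ⟨fun hk => ?_, fun hk => (hmono hk).trans hjx⟩
  by_contra hjk
  exact (hxj.trans_le (hmono (Nat.succ_le_of_lt (not_le.mp hjk)))).not_ge hk

lemma exists_strictMono_gap {α : ℕ → ℝ} (hpos : ∀ k, 0 < α k) (hmono : Monotone α) {q : ℝ}
    (hq : q < limsup (fun k => α (k + 1) / α k) atTop) :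
    ∃ φ : ℕ → ℕ, StrictMono φ ∧ ∀ n, q * α (φ n) < α (φ n + 1) := by
  have hratio : ∀ k, 1 ≤ α (k + 1) / α k := fun k =>
    (one_le_div (hpos k)).mpr (hmono k.le_succ)
  have hfreq : ∃ᶠ k in atTop, q < α (k + 1) / α k :=
    frequently_lt_of_lt_limsup (isCoboundedUnder_le_of_le atTop hratio) hq
  obtain ⟨φ, hφ, hgap⟩ := extraction_of_frequently_atTop hfreq
  exact ⟨φ, hφ, fun n => (lt_div_iff₀ (hpos (φ n))).mp (hgap n)⟩

lemma not_tendsto_div_rpow_of_map_mul_eq {f : ℝ → ℝ} {u : ℕ → ℝ} {q d C : ℝ}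
    (hq : 1 < q) (hd : 0 < d) (hC : C ≠ 0) (hu : Tendsto u atTop atTop)
    (hfu : ∀ n, f (q * u n) = f (u n)) :
    ¬ Tendsto (fun x => f x / x ^ d) atTop (nhds C) := by
  intro hf
  have hq0 : 0 < q := one_pos.trans hq
  have hlim : Tendsto (fun n => f (q * u n) / (q * u n) ^ d) atTop (nhds C) :=
    hf.comp (hu.const_mul_atTop hq0)
  have hlim' : Tendsto (fun n => f (q * u n) / (q * u n) ^ d) atTop (nhds (C / q ^ d)) := by
    refine ((hf.comp hu).div_const (q ^ d)).congr' ?_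
    filter_upwards [hu.eventually_gt_atTop 0] with n hn
    simp only [Function.comp_apply, hfu n, Real.mul_rpow hq0.le hn.le, div_div, mul_comm]
  have hqd : 1 < q ^ d := Real.one_lt_rpow hq hd
  have hCq : C * (q ^ d)⁻¹ = C := by
    simpa only [div_eq_mul_inv] using tendsto_nhds_unique hlim' hlim
  exact (inv_lt_one_of_one_lt₀ hqd).ne ((mul_eq_left₀ hC).mp hCq)

theorem stmt_3 (α : ℕ → ℝ) (hpos : ∀ k, 0 < α k) (hmono : Monotone α)
    (htop : Tendsto α atTop atTop)
    (hgaps : 1 < Filter.limsup (fun k => α (k + 1) / α k) atTop) :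
    ∀ d : ℝ, 0 < d → ¬ ∃ C : ℝ, 0 < C ∧
      Tendsto (fun x : ℝ => (({k : ℕ | α k ≤ x}.ncard : ℝ)) / x ^ d)
        atTop (nhds C) := by
  rintro d hd ⟨C, hC, hlim⟩
  obtain ⟨q, hq1, hqL⟩ := exists_between hgaps
  obtain ⟨φ, hφ, hgap⟩ := exists_strictMono_gap hpos hmono hqL
  have hdilate : ∀ n, α (φ n) ≤ q * α (φ n) := fun n =>
    le_mul_of_one_le_left (hpos (φ n)).le hq1.le
  refine not_tendsto_div_rpow_of_map_mul_eq hq1 hd hC.ne' (htop.comp hφ.tendsto_atTop)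
    (fun n => ?_) hlim
  simp only [Function.comp_apply]
  rw [setOf_le_eq_Iic_of_mem_Ico hmono le_rfl ((hdilate n).trans_lt (hgap n)),
    setOf_le_eq_Iic_of_mem_Ico hmono (hdilate n) (hgap n)]
end

section
/- Let R: ℝ → ℝ be a polynomial of degree d ≥ 2 with R(0) = 0 and real coefficients, and suppose [0,a] is forward invariant in the sense that R([0,a]) ⊇ [0,a] via d monotone branches, and b is the smallest positive number such that R⁻¹([0,b]) ∩ [0,∞) ⊆ [0,b]. If b is finite, then either R(b) = 0 or R(b) = b. -/
/-!
The set `K = R⁻¹[0, b] ∩ [0, ∞)` is closed. If `b ∉ K`, then `K` misses a whole interval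
`(c, b]`, so `c < b` would already have the invariance property, against minimality; hence
`R b ∈ [0, b]`. If `R b` were in the open interval `(0, b)`, continuity would put points
slightly to the right of `b` into `K ⊆ [0, b]`, which is absurd.
-/

open Set Polynomial Filter Topology

lemma apply_mem_Icc_of_minimal {f : ℝ → ℝ} (hf : Continuous f) {b : ℝ} (hb : 0 < b)
    (hinv : f ⁻¹' Icc 0 b ∩ Ici 0 ⊆ Icc 0 b)
    (hmin : ∀ b' : ℝ, 0 < b' → f ⁻¹' Icc 0 b' ∩ Ici 0 ⊆ Icc 0 b' → b ≤ b') :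
    f b ∈ Icc 0 b := by
  by_contra hfb
  have hclosed : IsClosed (f ⁻¹' Icc 0 b ∩ Ici 0) :=
    (isClosed_Icc.preimage hf).inter isClosed_Ici
  have hcompl : (f ⁻¹' Icc 0 b ∩ Ici 0)ᶜ ∈ 𝓝 b :=
    hclosed.isOpen_compl.mem_nhds fun h => hfb h.1
  obtain ⟨c, ⟨hc_pos, hcb⟩, hgap⟩ := exists_Ioc_subset_of_mem_nhds' hcompl (half_lt_self hb)
  have hc_inv : f ⁻¹' Icc 0 c ∩ Ici 0 ⊆ Icc 0 c := by
    intro x ⟨⟨hfx0, hfxc⟩, hx0⟩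
    have hxK : x ∈ f ⁻¹' Icc 0 b ∩ Ici 0 := ⟨⟨hfx0, hfxc.trans hcb.le⟩, hx0⟩
    have hxb : x ≤ b := (hinv hxK).2
    exact ⟨hx0, not_lt.1 fun hcx => hgap ⟨hcx, hxb⟩ hxK⟩
  linarith [hmin c (by linarith) hc_inv]

lemma apply_notMem_Ioo_of_preimage_Icc_subset {f : ℝ → ℝ} {b : ℝ} (hf : ContinuousAt f b)
    (hb : 0 ≤ b) (hinv : f ⁻¹' Icc 0 b ∩ Ici 0 ⊆ Icc 0 b) :
    f b ∉ Ioo 0 b := by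
  intro hfb
  have hnear : ∀ᶠ x in 𝓝[>] b, f x ∈ Ioo 0 b ∧ b < x :=
    ((hf.eventually_mem (isOpen_Ioo.mem_nhds hfb)).filter_mono nhdsWithin_le_nhds).and
      self_mem_nhdsWithin
  obtain ⟨x, hfx, hbx⟩ := hnear.exists
  exact hbx.not_ge (hinv ⟨Ioo_subset_Icc_self hfx, hb.trans hbx.le⟩).2

theorem stmt_15_general (p : ℝ[X])
    (b : ℝ) (hb : 0 < b)
    (hinv : (fun x => p.eval x) ⁻¹' Icc 0 b ∩ Ici 0 ⊆ Icc 0 b)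
    (hmin : ∀ b' : ℝ, 0 < b' →
      (fun x => p.eval x) ⁻¹' Icc 0 b' ∩ Ici 0 ⊆ Icc 0 b' → b ≤ b') :
    p.eval b = 0 ∨ p.eval b = b := by
  have hIcc := apply_mem_Icc_of_minimal p.continuous hb hinv hmin
  have hIoo := apply_notMem_Ioo_of_preimage_Icc_subset p.continuous.continuousAt hb.le hinv
  have hends : p.eval b ∈ Icc 0 b \ Ioo 0 b := ⟨hIcc, hIoo⟩
  rwa [Icc_sdiff_Ioo_same hb.le, mem_insert_iff, mem_singleton_iff] at hends

theorem stmt_15 (p : ℝ[X]) (hdeg : 2 ≤ p.natDegree) (h0 : p.eval 0 = 0)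
    (a : ℝ) (ha : 0 < a)
    (hfwd : Icc (0:ℝ) a ⊆ (fun x => p.eval x) '' Icc 0 a)
    (b : ℝ) (hb : 0 < b)
    (hinv : (fun x => p.eval x) ⁻¹' Icc 0 b ∩ Ici 0 ⊆ Icc 0 b)
    (hmin : ∀ b' : ℝ, 0 < b' →
      (fun x => p.eval x) ⁻¹' Icc 0 b' ∩ Ici 0 ⊆ Icc 0 b' → b ≤ b') :
    p.eval b = 0 ∨ p.eval b = b :=
  stmt_15_general p b hb hinv hmin
end
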